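/- Let B ∈ R^{d×d} be invertible with columns of Euclidean norm at most √m forming a C-approximate barycentric spanner of A, and let B̃ = (1/d) B Bᵀ. Then sup_{M∈A} Mᵀ B̃^{-1} M ≤ C² d². -/

import Mathlib

/-!
Write `M = Bα`. Since `B̃⁻¹ = d • B⁻ᵀB⁻¹`, the quadratic form collapses to
`Mᵀ B̃⁻¹ M = d ‖α‖² ≤ d · d C²`.
-/

open Matrix

namespace Matrix

variable {n K : Type*} [Fintype n] [DecidableEq n]

theorem inv_inv_smul [Field K] {X : Matrix n n K} (hX : IsUnit X.det) (c : K) :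
    (c⁻¹ • X)⁻¹ = c • X⁻¹ := by
  rcases eq_or_ne c 0 with rfl | hc
  · simp
  · exact inv_eq_left_inv (by simp [hc, smul_smul, nonsing_inv_mul _ hX])

theorem mulVec_dotProduct_inv_mul_transpose_mulVec [CommRing K] {B : Matrix n n K}
    (hB : IsUnit B.det) (α : n → K) :
    B *ᵥ α ⬝ᵥ (B * Bᵀ)⁻¹ *ᵥ (B *ᵥ α) = α ⬝ᵥ α := by
  have hBt : IsUnit Bᵀ.det := by rwa [det_transpose]
  rw [mul_inv_rev, mulVec_mulVec, mul_assoc, nonsing_inv_mul _ hB, mul_one,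
    dotProduct_mulVec, ← vecMul_transpose, vecMul_vecMul, mul_nonsing_inv _ hBt, vecMul_one]

end Matrix

theorem dotProduct_self_le_card_mul_sq {n K : Type*} [Fintype n] [Field K] [LinearOrder K]
    [IsStrictOrderedRing K] {α : n → K} {C : K} (hα : ∀ i, |α i| ≤ C) :
    α ⬝ᵥ α ≤ Fintype.card n * C ^ 2 := by
  have hsq : ∀ i ∈ Finset.univ, α i * α i ≤ C ^ 2 := fun i _ => by
    rw [← abs_mul_abs_self, sq]
    exact mul_self_le_mul_self (abs_nonneg _) (hα i)
  simpa [dotProduct] using Finset.sum_le_card_nsmul _ _ _ hsq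

theorem stmt5_general {d : ℕ} (A : Set (Fin d → ℝ))
    (B : Matrix (Fin d) (Fin d) ℝ) (hB : IsUnit B)
    (C : ℝ)
    (hspan : ∀ M ∈ A, ∃ α : Fin d → ℝ, M = B.mulVec α ∧ ∀ i, |α i| ≤ C)
    (Btil : Matrix (Fin d) (Fin d) ℝ) (hBtil : Btil = (d : ℝ)⁻¹ • (B * Bᵀ)) :
    ∀ M ∈ A, M ⬝ᵥ Btil⁻¹.mulVec M ≤ C ^ 2 * (d : ℝ) ^ 2 := by
  intro M hM
  obtain ⟨α, rfl, hα⟩ := hspan M hM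
  have hdet : IsUnit B.det := (isUnit_iff_isUnit_det B).mp hB
  have hdetBBt : IsUnit (B * Bᵀ).det := by
    rw [det_mul, det_transpose]
    exact hdet.mul hdet
  rw [hBtil, inv_inv_smul hdetBBt, smul_mulVec, dotProduct_smul,
    mulVec_dotProduct_inv_mul_transpose_mulVec hdet, smul_eq_mul]
  calc (d : ℝ) * (α ⬝ᵥ α) ≤ d * (d * C ^ 2) := by
        gcongr
        simpa using dotProduct_self_le_card_mul_sq hα
    _ = C ^ 2 * (d : ℝ) ^ 2 := by ring

/-- If the columns of `B` (of Euclidean norm at most `√m`) form a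
`C`-approximate barycentric spanner of `A` and `B̃ = (1/d) B Bᵀ`, then
`sup_{M∈A} Mᵀ B̃⁻¹ M ≤ C² d²`. -/
theorem stmt5 {d : ℕ} (A : Set (Fin d → ℝ)) (m : ℝ)
    (B : Matrix (Fin d) (Fin d) ℝ) (hB : IsUnit B)
    (hcols : ∀ j : Fin d, (fun i => B i j) ∈ A)
    (hnorm : ∀ j : Fin d, ∑ i, (B i j) ^ 2 ≤ m)
    (C : ℝ) (hC : 1 < C)
    (hspan : ∀ M ∈ A, ∃ α : Fin d → ℝ, M = B.mulVec α ∧ ∀ i, |α i| ≤ C)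
    (Btil : Matrix (Fin d) (Fin d) ℝ) (hBtil : Btil = (d : ℝ)⁻¹ • (B * Bᵀ)) :
    ∀ M ∈ A, M ⬝ᵥ Btil⁻¹.mulVec M ≤ C ^ 2 * (d : ℝ) ^ 2 :=
  stmt5_general A B hB C hspan Btil hBtil
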